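/- Let g, h be Lie algebras with invariants t_g, t_h, and let c ⊂ g be a coisotropic Lie subalgebra. If A is a (g⊕h)-quasi-Poisson algebra, then the subspace A^c of c-invariants is closed under both the product and the bracket, and (A^c, m, {·,·}), with the h-action, is an h-quasi-Poisson algebra. In particular the φ-twisted Jacobi identity for h holds on A^c because the component of φ_{g⊕h} coming from g acts by zero on triples of c-invariants. -/

import Mathlib

/-!
Inside `g ⊕ h` the two summands commute, so the mixed terms of `[t¹², t²³]` for
`t = t_g + t_h` vanish and `φ_{g⊕h}` is the sum of the images of `φ_g` and `φ_h`.
Coisotropy of `c` says that `t_g` dies in `(g/c) ⊗ (g/c)`, i.e. (right exactness of `⊗`)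
`t_g ∈ c ⊗ g + g ⊗ c`. Expanding `[t_g¹², t_g²³]` along this decomposition, every term has an
element of `c` in its first or last leg, or `[c, c] ⊆ c` in its middle leg, so `φ_g` acts by
zero on triples of `c`-invariants. Closure of `A^c` under the product and the bracket is the
derivation property of the action.
-/

open TensorProduct

/-- The product of two Lie rings is a Lie ring (componentwise bracket). -/
instance prodLieRing (L M : Type*) [LieRing L] [LieRing M] : LieRing (L × M) where
  bracket p q := (⁅p.1, q.1⁆, ⁅p.2, q.2⁆)
  add_lie x y z := by ext <;> exact add_lie _ _ _
  lie_add x y z := by ext <;> exact lie_add _ _ _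
  lie_self x := by ext <;> exact lie_self _
  leibniz_lie x y z := by ext <;> exact leibniz_lie _ _ _

/-- The product of two Lie algebras is a Lie algebra. -/
instance prodLieAlgebra (R L M : Type*) [CommRing R] [LieRing L] [LieRing M]
    [LieAlgebra R L] [LieAlgebra R M] : LieAlgebra R (L × M) where
  lie_smul t x y := by ext <;> exact lie_smul _ _ _

variable {k : Type*} [Field k] [CharZero k]

/-- The action of an element of `g ⊗ g` on `A ⊗ A` via the two tensor legs. -/
noncomputable def twoLeg {g A : Type*} [LieRing g] [LieAlgebra k g] [CommRing A]
    [Algebra k A] (ρ : g →ₗ[k] Module.End k A) :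
    g ⊗[k] g →ₗ[k] Module.End k (A ⊗[k] A) :=
  TensorProduct.lift (((TensorProduct.mapBilinear (RingHom.id k) A A A A).comp ρ).compl₂ ρ)

/-- The action of an element of `g ⊗ (g ⊗ g)` on `A ⊗ (A ⊗ A)` via the three legs. -/
noncomputable def threeLeg {g A : Type*} [LieRing g] [LieAlgebra k g] [CommRing A]
    [Algebra k A] (ρ : g →ₗ[k] Module.End k A) :
    g ⊗[k] (g ⊗[k] g) →ₗ[k] Module.End k (A ⊗[k] (A ⊗[k] A)) :=
  TensorProduct.lift
    (((TensorProduct.mapBilinear (RingHom.id k) A (A ⊗[k] A) A (A ⊗[k] A)).comp ρ).compl₂ (twoLeg ρ))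

/-- The triple product `m⁽³⁾ = m ∘ (1 ⊗ m) : A ⊗ (A ⊗ A) → A`. -/
noncomputable def tripleMul (k : Type*) (A : Type*) [Field k] [CommRing A] [Algebra k A] :
    A ⊗[k] (A ⊗[k] A) →ₗ[k] A :=
  (LinearMap.mul' k A).comp (TensorProduct.map LinearMap.id (LinearMap.mul' k A))

/-- The element `[t¹², t²³] ∈ g ⊗ g ⊗ g`. -/
noncomputable def tCommutator (k : Type*) {g : Type*} [Field k] [LieRing g]
    [LieAlgebra k g] (t : g ⊗[k] g) : g ⊗[k] (g ⊗[k] g) :=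
  (TensorProduct.map LinearMap.id
      (TensorProduct.map (TensorProduct.lift (LieAlgebra.ad k g)) LinearMap.id))
    ((TensorProduct.map LinearMap.id ((TensorProduct.assoc k g g g).symm.toLinearMap))
      ((TensorProduct.assoc k g g (g ⊗[k] g)).toLinearMap (t ⊗ₜ[k] t)))

/-- The Cartan trivector `φ = (1/4)[t¹², t²³]`. -/
noncomputable def cartanPhi (k : Type*) {g : Type*} [Field k] [LieRing g]
    [LieAlgebra k g] (t : g ⊗[k] g) : g ⊗[k] (g ⊗[k] g) :=
  (4 : k)⁻¹ • tCommutator k t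

noncomputable def tCommutatorBilin (R L : Type*) [CommRing R] [LieRing L] [LieAlgebra R L] :
    L ⊗[R] L →ₗ[R] L ⊗[R] L →ₗ[R] L ⊗[R] (L ⊗[R] L) :=
  (TensorProduct.mk R (L ⊗[R] L) (L ⊗[R] L)).compr₂
    (map LinearMap.id (map (lift (LieAlgebra.ad R L)) LinearMap.id) ∘ₗ
      map LinearMap.id (TensorProduct.assoc R L L L).symm.toLinearMap ∘ₗ
      (TensorProduct.assoc R L L (L ⊗[R] L)).toLinearMap)

section CommRing

variable {R L L₁ L₂ M : Type*} [CommRing R] [LieRing L] [LieAlgebra R L] [LieRing L₁]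
  [LieAlgebra R L₁] [LieRing L₂] [LieAlgebra R L₂] [LieRing M] [LieAlgebra R M]

@[simp]
lemma tCommutatorBilin_tmul (a b c d : L) :
    tCommutatorBilin R L (a ⊗ₜ b) (c ⊗ₜ d) = a ⊗ₜ (⁅b, c⁆ ⊗ₜ d) := by
  simp [tCommutatorBilin]

lemma tCommutatorBilin_map_map (f : L₁ →ₗ[R] L) (hf : ∀ x y, f ⁅x, y⁆ = ⁅f x, f y⁆)
    (u v : L₁ ⊗[R] L₁) :
    tCommutatorBilin R L (map f f u) (map f f v) =
      map f (map f f) (tCommutatorBilin R L₁ u v) := by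
  suffices (tCommutatorBilin R L).compl₁₂ (map f f) (map f f) =
      (tCommutatorBilin R L₁).compr₂ (map f (map f f)) from LinearMap.congr_fun₂ this u v
  ext
  simp [hf]

lemma tCommutatorBilin_map_map_eq_zero (f₁ : L₁ →ₗ[R] L) (f₂ : L₂ →ₗ[R] L)
    (hf : ∀ x y, ⁅f₁ x, f₂ y⁆ = 0) (u : L₁ ⊗[R] L₁) (v : L₂ ⊗[R] L₂) :
    tCommutatorBilin R L (map f₁ f₁ u) (map f₂ f₂ v) = 0 := by
  suffices (tCommutatorBilin R L).compl₁₂ (map f₁ f₁) (map f₂ f₂) = 0 from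
    LinearMap.congr_fun₂ this u v
  ext
  simp [hf]

lemma inl_lie (x y : L) :
    LinearMap.inl R L M ⁅x, y⁆ = ⁅LinearMap.inl R L M x, LinearMap.inl R L M y⁆ :=
  Prod.ext rfl (lie_zero 0).symm

lemma inr_lie (x y : M) :
    LinearMap.inr R L M ⁅x, y⁆ = ⁅LinearMap.inr R L M x, LinearMap.inr R L M y⁆ :=
  Prod.ext (lie_zero 0).symm rfl

lemma inl_lie_inr (x : L) (y : M) : ⁅LinearMap.inl R L M x, LinearMap.inr R L M y⁆ = 0 :=
  Prod.ext (lie_zero x) (zero_lie y)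

end CommRing

lemma exists_rTensor_add_lTensor_of_map_mkQ_eq_zero {R M : Type*} [CommRing R]
    [AddCommGroup M] [Module R M] (N : Submodule R M) {t : M ⊗[R] M}
    (ht : map N.mkQ N.mkQ t = 0) :
    ∃ u ∈ LinearMap.range (N.subtype.rTensor M), ∃ v ∈ LinearMap.range (N.subtype.lTensor M),
      u + v = t := by
  have hexact := LinearMap.exact_subtype_mkQ N
  rw [← LinearMap.mem_ker, map_ker hexact N.mkQ_surjective hexact N.mkQ_surjective] at ht
  obtain ⟨v, hv, u, hu, rfl⟩ := Submodule.mem_sup.1 ht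
  exact ⟨u, hu, v, hv, add_comm u v⟩

section Field

variable {k : Type*} [Field k]

lemma tCommutator_eq_tCommutatorBilin {g : Type*} [LieRing g] [LieAlgebra k g]
    (t : g ⊗[k] g) : tCommutator k t = tCommutatorBilin k g t t := rfl

lemma cartanPhi_map_add_map {g₁ g₂ g : Type*} [LieRing g₁] [LieAlgebra k g₁] [LieRing g₂]
    [LieAlgebra k g₂] [LieRing g] [LieAlgebra k g] (f₁ : g₁ →ₗ[k] g) (f₂ : g₂ →ₗ[k] g)
    (hf₁ : ∀ x y, f₁ ⁅x, y⁆ = ⁅f₁ x, f₁ y⁆) (hf₂ : ∀ x y, f₂ ⁅x, y⁆ = ⁅f₂ x, f₂ y⁆)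
    (hf₁₂ : ∀ x y, ⁅f₁ x, f₂ y⁆ = 0) (t₁ : g₁ ⊗[k] g₁) (t₂ : g₂ ⊗[k] g₂) :
    cartanPhi k (map f₁ f₁ t₁ + map f₂ f₂ t₂) =
      map f₁ (map f₁ f₁) (cartanPhi k t₁) + map f₂ (map f₂ f₂) (cartanPhi k t₂) := by
  have hf₂₁ : ∀ y x, ⁅f₂ y, f₁ x⁆ = 0 := fun y x => by rw [← lie_skew, hf₁₂, neg_zero]
  simp only [cartanPhi, tCommutator_eq_tCommutatorBilin, map_add, LinearMap.add_apply,
    tCommutatorBilin_map_map _ hf₁, tCommutatorBilin_map_map _ hf₂,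
    tCommutatorBilin_map_map_eq_zero _ _ hf₁₂, tCommutatorBilin_map_map_eq_zero _ _ hf₂₁,
    add_zero, zero_add, map_smul, smul_add]

lemma threeLeg_map {g₁ g A : Type*} [LieRing g₁] [LieAlgebra k g₁] [LieRing g]
    [LieAlgebra k g] [CommRing A] [Algebra k A] (f : g₁ →ₗ[k] g)
    (ρ : g →ₗ[k] Module.End k A) (x : g₁ ⊗[k] (g₁ ⊗[k] g₁)) :
    threeLeg ρ (map f (map f f) x) = threeLeg (ρ ∘ₗ f) x := by
  suffices threeLeg ρ ∘ₗ map f (map f f) = threeLeg (ρ ∘ₗ f) from LinearMap.congr_fun this x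
  ext
  simp [threeLeg, twoLeg]

@[simp]
lemma tripleMul_threeLeg_tmul {g A : Type*} [LieRing g] [LieAlgebra k g] [CommRing A]
    [Algebra k A] (ρ : g →ₗ[k] Module.End k A) (x y z : g) (a₁ a₂ a₃ : A) :
    tripleMul k A (threeLeg ρ (x ⊗ₜ (y ⊗ₜ z)) (a₁ ⊗ₜ (a₂ ⊗ₜ a₃))) =
      ρ x a₁ * (ρ y a₂ * ρ z a₃) := by
  simp [threeLeg, twoLeg, tripleMul]

lemma tripleMul_threeLeg_cartanPhi_eq_zero {g A : Type*} [LieRing g] [LieAlgebra k g]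
    [CommRing A] [Algebra k A] (ρ : g →ₗ[k] Module.End k A) (c : LieSubalgebra k g)
    {t : g ⊗[k] g} (hco : map c.toSubmodule.mkQ c.toSubmodule.mkQ t = 0) {a₁ a₂ a₃ : A}
    (h₁ : ∀ ξ ∈ c, ρ ξ a₁ = 0) (h₂ : ∀ ξ ∈ c, ρ ξ a₂ = 0) (h₃ : ∀ ξ ∈ c, ρ ξ a₃ = 0) :
    tripleMul k A (threeLeg ρ (cartanPhi k t) (a₁ ⊗ₜ (a₂ ⊗ₜ a₃))) = 0 := by
  let E := (tCommutatorBilin k g).compr₂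
    (tripleMul k A ∘ₗ LinearMap.applyₗ (a₁ ⊗ₜ (a₂ ⊗ₜ a₃)) ∘ₗ threeLeg ρ)
  have hE : ∀ x y z w : g, E (x ⊗ₜ y) (z ⊗ₜ w) = ρ x a₁ * (ρ ⁅y, z⁆ a₂ * ρ w a₃) := by
    simp [E]
  let s := c.toSubmodule.subtype
  have hcg : ∀ u x, E (s.rTensor g u) x = 0 := by
    refine LinearMap.congr_fun₂ (?_ : E ∘ₗ s.rTensor g = 0)
    ext ⟨ξ, hξ⟩ y z w
    simp [s, hE, h₁ ξ hξ]
  have hgc_cg : ∀ v u, E (s.lTensor g v) (s.rTensor g u) = 0 := by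
    refine LinearMap.congr_fun₂ (?_ : E.compl₁₂ (s.lTensor g) (s.rTensor g) = 0)
    ext x ⟨η, hη⟩ ⟨ξ, hξ⟩ w
    simp [s, hE, h₂ _ (c.lie_mem hη hξ)]
  have hgc_gc : ∀ v v', E (s.lTensor g v) (s.lTensor g v') = 0 := by
    refine LinearMap.congr_fun₂ (?_ : E.compl₁₂ (s.lTensor g) (s.lTensor g) = 0)
    ext x ⟨η, hη⟩ z ⟨ξ, hξ⟩
    simp [s, hE, h₃ ξ hξ]
  obtain ⟨_, ⟨u, rfl⟩, _, ⟨v, rfl⟩, rfl⟩ :=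
    exists_rTensor_add_lTensor_of_map_mkQ_eq_zero c.toSubmodule hco
  calc _ = (4 : k)⁻¹ • E (s.rTensor g u + s.lTensor g v) (s.rTensor g u + s.lTensor g v) := by
        simp [E, cartanPhi, tCommutator_eq_tCommutatorBilin, s]
    _ = 0 := by
        simp only [map_add, LinearMap.add_apply, hcg, hgc_cg, hgc_gc, add_zero, smul_zero]

end Field

set_option linter.unusedSectionVars false in
theorem statement_11_general
    {g h : Type*} [LieRing g] [LieAlgebra k g] [LieRing h] [LieAlgebra k h]
    (tg : g ⊗[k] g) (th : h ⊗[k] h)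
    (c : LieSubalgebra k g)
    (hco : TensorProduct.map (Submodule.mkQ c.toSubmodule) (Submodule.mkQ c.toSubmodule)
        tg = 0)
    {A : Type*} [CommRing A] [Algebra k A]
    (ρ : (g × h) →ₗ[k] Module.End k A)
    (hder : ∀ (p : g × h) (a b : A), ρ p (a * b) = ρ p a * b + a * ρ p b)
    (br : A →ₗ[k] A →ₗ[k] A)
    (hinvbr : ∀ (p : g × h) (a b : A), ρ p (br a b) = br (ρ p a) b + br a (ρ p b))
    (hjac : ∀ a₁ a₂ a₃ : A,
      br a₁ (br a₂ a₃) + br a₂ (br a₃ a₁) + br a₃ (br a₁ a₂) =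
        - tripleMul k A (threeLeg (k := k) ρ
            (cartanPhi k (TensorProduct.map (LinearMap.inl k g h) (LinearMap.inl k g h) tg
              + TensorProduct.map (LinearMap.inr k g h) (LinearMap.inr k g h) th))
            (a₁ ⊗ₜ[k] (a₂ ⊗ₜ[k] a₃)))) :
    -- `A^c` is closed under the product
    (∀ a b : A, (∀ ξ ∈ c, ρ (ξ, 0) a = 0) → (∀ ξ ∈ c, ρ (ξ, 0) b = 0) →
        ∀ ξ ∈ c, ρ (ξ, 0) (a * b) = 0)
    -- `A^c` is closed under the bracket
    ∧ (∀ a b : A, (∀ ξ ∈ c, ρ (ξ, 0) a = 0) → (∀ ξ ∈ c, ρ (ξ, 0) b = 0) →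
        ∀ ξ ∈ c, ρ (ξ, 0) (br a b) = 0)
    -- the `φ_h`-twisted Jacobi identity holds on `A^c`
    ∧ (∀ a₁ a₂ a₃ : A,
        (∀ ξ ∈ c, ρ (ξ, 0) a₁ = 0) → (∀ ξ ∈ c, ρ (ξ, 0) a₂ = 0) →
        (∀ ξ ∈ c, ρ (ξ, 0) a₃ = 0) →
        br a₁ (br a₂ a₃) + br a₂ (br a₃ a₁) + br a₃ (br a₁ a₂) =
          - tripleMul k A (threeLeg (k := k) (ρ ∘ₗ LinearMap.inr k g h) (cartanPhi k th)
              (a₁ ⊗ₜ[k] (a₂ ⊗ₜ[k] a₃)))) := by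
  refine ⟨fun a b ha hb ξ hξ => ?_, fun a b ha hb ξ hξ => ?_, fun a₁ a₂ a₃ h₁ h₂ h₃ => ?_⟩
  · rw [hder, ha ξ hξ, hb ξ hξ, zero_mul, mul_zero, add_zero]
  · rw [hinvbr, ha ξ hξ, hb ξ hξ, map_zero, map_zero, LinearMap.zero_apply, add_zero]
  · rw [hjac, cartanPhi_map_add_map _ _ inl_lie inr_lie inl_lie_inr, map_add, LinearMap.add_apply,
      map_add, threeLeg_map, threeLeg_map,
      tripleMul_threeLeg_cartanPhi_eq_zero (ρ ∘ₗ LinearMap.inl k g h) c hco h₁ h₂ h₃, zero_add]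

/-- let `c ⊂ g` be a coisotropic Lie subalgebra and `A` a
`(g ⊕ h)`-quasi-Poisson algebra.  Then the subspace `A^c` of `c`-invariants is closed
under the product and the bracket, and with the `h`-action it is an `h`-quasi-Poisson
algebra; in particular the `φ_h`-twisted Jacobi identity holds on `A^c`. -/
theorem statement_11
    {g h : Type*} [LieRing g] [LieAlgebra k g] [LieRing h] [LieAlgebra k h]
    (tg : g ⊗[k] g) (th : h ⊗[k] h)
    (htg_symm : TensorProduct.comm k g g tg = tg) (htg_inv : ∀ x : g, ⁅x, tg⁆ = 0)
    (hth_symm : TensorProduct.comm k h h th = th) (hth_inv : ∀ x : h, ⁅x, th⁆ = 0)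
    (c : LieSubalgebra k g)
    (hco : TensorProduct.map (Submodule.mkQ c.toSubmodule) (Submodule.mkQ c.toSubmodule)
        tg = 0)
    {A : Type*} [CommRing A] [Algebra k A]
    (ρ : (g × h) →ₗ[k] Module.End k A)
    (hder : ∀ (p : g × h) (a b : A), ρ p (a * b) = ρ p a * b + a * ρ p b)
    (hlie : ∀ p q : g × h, ρ ⁅p, q⁆ = ρ p * ρ q - ρ q * ρ p)
    (br : A →ₗ[k] A →ₗ[k] A)
    (hskew : ∀ a b, br a b = - br b a)
    (hbider : ∀ a b c', br a (b * c') = br a b * c' + b * br a c')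
    (hinvbr : ∀ (p : g × h) (a b : A), ρ p (br a b) = br (ρ p a) b + br a (ρ p b))
    (hjac : ∀ a₁ a₂ a₃ : A,
      br a₁ (br a₂ a₃) + br a₂ (br a₃ a₁) + br a₃ (br a₁ a₂) =
        - tripleMul k A (threeLeg (k := k) ρ
            (cartanPhi k (TensorProduct.map (LinearMap.inl k g h) (LinearMap.inl k g h) tg
              + TensorProduct.map (LinearMap.inr k g h) (LinearMap.inr k g h) th))
            (a₁ ⊗ₜ[k] (a₂ ⊗ₜ[k] a₃)))) :
    -- `A^c` is closed under the product
    (∀ a b : A, (∀ ξ ∈ c, ρ (ξ, 0) a = 0) → (∀ ξ ∈ c, ρ (ξ, 0) b = 0) →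
        ∀ ξ ∈ c, ρ (ξ, 0) (a * b) = 0)
    -- `A^c` is closed under the bracket
    ∧ (∀ a b : A, (∀ ξ ∈ c, ρ (ξ, 0) a = 0) → (∀ ξ ∈ c, ρ (ξ, 0) b = 0) →
        ∀ ξ ∈ c, ρ (ξ, 0) (br a b) = 0)
    -- the `φ_h`-twisted Jacobi identity holds on `A^c`
    ∧ (∀ a₁ a₂ a₃ : A,
        (∀ ξ ∈ c, ρ (ξ, 0) a₁ = 0) → (∀ ξ ∈ c, ρ (ξ, 0) a₂ = 0) →
        (∀ ξ ∈ c, ρ (ξ, 0) a₃ = 0) →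
        br a₁ (br a₂ a₃) + br a₂ (br a₃ a₁) + br a₃ (br a₁ a₂) =
          - tripleMul k A (threeLeg (k := k) (ρ ∘ₗ LinearMap.inr k g h) (cartanPhi k th)
              (a₁ ⊗ₜ[k] (a₂ ⊗ₜ[k] a₃)))) :=
  statement_11_general tg th c hco ρ hder br hinvbr hjac
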